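/- arXiv:2603.15770 — 3 statements merged into one kernel-verified Lean document; each statement's English description precedes it below -/
import Mathlib

section
/- Let E be a finite-dimensional real normed vector space, f, g : E → ℂ Schwartz functions, and K : E → ℝ measurable and locally integrable such that there exist m > 0, C_K > 0, R₀ > 0 with |K(z)| ≤ C_K e^(−m‖z‖) for all ‖z‖ ≥ R₀. Then for every α > 0 there exists c ≥ 0 such that for all a ∈ E, |∫∫ f(x) K(x−y) g(y−a) dy dx| ≤ c (1+‖a‖)^(−α). -/
open MeasureTheory

theorem schwartz_kernel_polynomial_decay
    {E : Type*} [NormedAddCommGroup E] [NormedSpace ℝ E] [FiniteDimensional ℝ E]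
    [MeasurableSpace E] [BorelSpace E]
    (μ : Measure E) [μ.IsAddHaarMeasure]
    (f g : SchwartzMap E ℂ)
    (K : E → ℝ) (hKmeas : Measurable K) (hKloc : LocallyIntegrable K μ)
    (m C_K R₀ : ℝ) (hm : 0 < m) (hCK : 0 < C_K) (hR₀ : 0 < R₀)
    (hKdecay : ∀ z : E, R₀ ≤ ‖z‖ → |K z| ≤ C_K * Real.exp (-m * ‖z‖)) :
    ∀ α : ℝ, 0 < α → ∃ c : ℝ, 0 ≤ c ∧ ∀ a : E,
      ‖∫ x, ∫ y, f x * (K (x - y) : ℂ) * g (y - a) ∂μ ∂μ‖ ≤ c * (1 + ‖a‖) ^ (-α) := by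
  intro α hα
  obtain ⟨n, hn⟩ := exists_nat_ge α
  set d : ℕ := Module.finrank ℝ E with hd
  set p : ℕ := n + (d + 1) with hp
  have h1x : ∀ x : E, (0:ℝ) < 1 + ‖x‖ := fun x => by positivity
  -- rpow versus nat pow
  have hrpow_le : ∀ x : E, (1 + ‖x‖) ^ α ≤ (1 + ‖x‖) ^ (n : ℕ) := by
    intro x
    calc (1 + ‖x‖) ^ α ≤ (1 + ‖x‖) ^ (n : ℝ) :=
          Real.rpow_le_rpow_of_exponent_le (by linarith [norm_nonneg x]) hn
      _ = (1 + ‖x‖) ^ (n : ℕ) := Real.rpow_natCast _ n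
  have hnatcast : ∀ x : E, (1 + ‖x‖ : ℝ) ^ (-((d:ℝ)+1)) = ((1 + ‖x‖) ^ (d+1 : ℕ))⁻¹ := by
    intro x
    rw [Real.rpow_neg (h1x x).le]
    congr 1
    rw [show ((d:ℝ)+1) = ((d+1 : ℕ) : ℝ) by push_cast; ring, Real.rpow_natCast]
  -- bound for g
  set Cg : ℝ := 2 ^ n * (Finset.Iic ((n:ℕ),(0:ℕ))).sup (fun m => SchwartzMap.seminorm ℝ m.1 m.2) g
    with hCg
  have hCg0 : 0 ≤ Cg := by positivity
  have hgb : ∀ y : E, (1 + ‖y‖) ^ α * ‖g y‖ ≤ Cg := by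
    intro y
    have h := SchwartzMap.one_add_le_sup_seminorm_apply (𝕜 := ℝ) (m := ((n:ℕ),(0:ℕ)))
      (le_refl n) (le_refl 0) g y
    rw [norm_iteratedFDeriv_zero] at h
    calc (1 + ‖y‖) ^ α * ‖g y‖ ≤ (1 + ‖y‖) ^ (n:ℕ) * ‖g y‖ :=
          mul_le_mul_of_nonneg_right (hrpow_le y) (norm_nonneg _)
      _ ≤ Cg := h
  -- bound for f
  set Cf : ℝ := 2 ^ p * (Finset.Iic ((p:ℕ),(0:ℕ))).sup (fun m => SchwartzMap.seminorm ℝ m.1 m.2) f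
    with hCf
  have hCf0 : 0 ≤ Cf := by positivity
  have hfb : ∀ x : E, (1 + ‖x‖) ^ (p:ℕ) * ‖f x‖ ≤ Cf := by
    intro x
    have h := SchwartzMap.one_add_le_sup_seminorm_apply (𝕜 := ℝ) (m := ((p:ℕ),(0:ℕ)))
      (le_refl p) (le_refl 0) f x
    rwa [norm_iteratedFDeriv_zero] at h
  -- the weighted f function
  set F : E → ℝ := fun x => (1 + ‖x‖) ^ α * ‖f x‖ with hF
  have hF0 : ∀ x, 0 ≤ F x := fun x =>
    mul_nonneg (Real.rpow_nonneg (h1x x).le _) (norm_nonneg _)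
  have hFle : ∀ x : E, F x ≤ Cf * (1 + ‖x‖) ^ (-((d:ℝ)+1)) := by
    intro x
    rw [hnatcast x]
    have hb : (0:ℝ) < (1 + ‖x‖) ^ (d+1 : ℕ) := pow_pos (h1x x) _
    rw [← div_eq_mul_inv, le_div_iff₀ hb]
    calc F x * (1 + ‖x‖) ^ (d+1 : ℕ)
        ≤ ((1 + ‖x‖) ^ (n:ℕ) * ‖f x‖) * (1 + ‖x‖) ^ (d+1 : ℕ) :=
          mul_le_mul_of_nonneg_right
            (mul_le_mul_of_nonneg_right (hrpow_le x) (norm_nonneg _)) hb.le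
      _ = (1 + ‖x‖) ^ (p:ℕ) * ‖f x‖ := by rw [hp]; ring
      _ ≤ Cf := hfb x
  have hFint : Integrable F μ := by
    have hint : Integrable (fun x : E => Cf * (1 + ‖x‖) ^ (-((d:ℝ)+1))) μ :=
      (integrable_one_add_norm (by push_cast; linarith)).const_mul Cf
    refine hint.mono' ?_ (Filter.Eventually.of_forall fun x => ?_)
    · exact (((continuous_const.add continuous_norm).rpow_const
        (fun x => Or.inl (h1x x).ne')).mul f.continuous.norm).aestronglyMeasurable
    · rw [Real.norm_of_nonneg (hF0 x)]
      exact hFle x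
  -- the weighted kernel
  set Kt : E → ℝ := fun z => (1 + ‖z‖) ^ α * |K z| with hKt
  have hKt0 : ∀ z, 0 ≤ Kt z := fun z =>
    mul_nonneg (Real.rpow_nonneg (h1x z).le _) (abs_nonneg _)
  have hKtmeas : Measurable Kt :=
    (((continuous_const.add continuous_norm).rpow_const
      (fun z => Or.inl (h1x z).ne')).measurable).mul hKmeas.abs
  set s : ℝ := m / p with hs
  have hps : 0 < (p:ℝ) := by positivity
  have hs0 : 0 < s := div_pos hm hps
  set M : ℝ := max 1 s⁻¹ with hM
  have hM1 : (1:ℝ) ≤ M := le_max_left _ _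
  have hMs : (1:ℝ) ≤ M * s := by
    have h := le_max_right (1:ℝ) s⁻¹
    calc (1:ℝ) = s⁻¹ * s := (inv_mul_cancel₀ hs0.ne').symm
      _ ≤ M * s := mul_le_mul_of_nonneg_right h hs0.le
  have hkey : ∀ t : ℝ, 0 ≤ t → (1 + t) ^ (p:ℕ) ≤ M ^ (p:ℕ) * Real.exp (m * t) := by
    intro t ht
    have h1 : 1 + t ≤ M * Real.exp (s * t) := by
      have h2 : s * t + 1 ≤ Real.exp (s * t) := Real.add_one_le_exp _
      have h3 : 1 + t ≤ M * (s * t + 1) := by nlinarith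
      calc 1 + t ≤ M * (s * t + 1) := h3
        _ ≤ M * Real.exp (s * t) := mul_le_mul_of_nonneg_left h2 (by linarith)
    have hmt : (p:ℝ) * (s * t) = m * t := by
      rw [hs]; field_simp
    calc (1 + t) ^ (p:ℕ) ≤ (M * Real.exp (s * t)) ^ (p:ℕ) :=
          pow_le_pow_left₀ (by linarith) h1 _
      _ = M ^ (p:ℕ) * Real.exp (s * t) ^ (p:ℕ) := mul_pow _ _ _
      _ = M ^ (p:ℕ) * Real.exp (m * t) := by
          rw [← Real.exp_nat_mul, hmt]
  have hKtint : Integrable Kt μ := by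
    have h1 : IntegrableOn Kt (Metric.closedBall (0:E) R₀) μ := by
      have hKint : IntegrableOn K (Metric.closedBall (0:E) R₀) μ :=
        hKloc.integrableOn_isCompact (isCompact_closedBall 0 R₀)
      refine (hKint.norm.const_mul ((1 + R₀) ^ α)).mono'
        hKtmeas.aestronglyMeasurable.restrict ?_
      refine (ae_restrict_iff' measurableSet_closedBall).2
        (Filter.Eventually.of_forall fun z hz => ?_)
      rw [Real.norm_of_nonneg (hKt0 z)]
      have hz' : ‖z‖ ≤ R₀ := by
        simpa [Metric.mem_closedBall, dist_zero_right] using hz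
      have hle : (1 + ‖z‖) ^ α ≤ (1 + R₀) ^ α :=
        Real.rpow_le_rpow (h1x z).le (by linarith) hα.le
      rw [Real.norm_eq_abs]
      exact mul_le_mul_of_nonneg_right hle (abs_nonneg _)
    have h2 : IntegrableOn Kt (Metric.closedBall (0:E) R₀)ᶜ μ := by
      have hint : Integrable (fun z : E => (C_K * M ^ (p:ℕ)) * (1 + ‖z‖) ^ (-((d:ℝ)+1))) μ :=
        (integrable_one_add_norm (by push_cast; linarith)).const_mul _
      refine hint.integrableOn.mono' hKtmeas.aestronglyMeasurable.restrict ?_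
      refine (ae_restrict_iff' measurableSet_closedBall.compl).2
        (Filter.Eventually.of_forall fun z hz => ?_)
      have hz' : R₀ ≤ ‖z‖ := by
        simp only [Set.mem_compl_iff, Metric.mem_closedBall, dist_zero_right, not_le] at hz
        linarith
      rw [Real.norm_of_nonneg (hKt0 z), hnatcast z]
      have hb : (0:ℝ) < (1 + ‖z‖) ^ (d+1:ℕ) := pow_pos (h1x z) _
      have hK1 : |K z| ≤ C_K * Real.exp (-m * ‖z‖) := hKdecay z hz'
      have hexp : (1 + ‖z‖) ^ (p:ℕ) * Real.exp (-m * ‖z‖) ≤ M ^ (p:ℕ) := by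
        rw [neg_mul, Real.exp_neg, mul_inv_le_iff₀ (Real.exp_pos _)]
        exact hkey ‖z‖ (norm_nonneg z)
      rw [← div_eq_mul_inv, le_div_iff₀ hb]
      calc Kt z * (1 + ‖z‖) ^ (d+1:ℕ)
          ≤ ((1 + ‖z‖) ^ (n:ℕ) * (C_K * Real.exp (-m * ‖z‖))) * (1 + ‖z‖) ^ (d+1:ℕ) := by
            refine mul_le_mul_of_nonneg_right ?_ hb.le
            exact mul_le_mul (hrpow_le z) hK1 (abs_nonneg _) (pow_nonneg (h1x z).le _)
        _ = C_K * ((1 + ‖z‖) ^ (p:ℕ) * Real.exp (-m * ‖z‖)) := by rw [hp]; ring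
        _ ≤ C_K * M ^ (p:ℕ) := mul_le_mul_of_nonneg_left hexp hCK.le
    have h3 := h1.union h2
    rwa [Set.union_compl_self, integrableOn_univ] at h3
  set A : ℝ := ∫ z, Kt z ∂μ with hA
  set B : ℝ := ∫ x, F x ∂μ with hB
  have hA0 : 0 ≤ A := integral_nonneg hKt0
  have hB0 : 0 ≤ B := integral_nonneg hF0
  refine ⟨Cg * A * B, by positivity, fun a => ?_⟩
  have hkey2 : ∀ x y : E, ‖f x * (K (x - y) : ℂ) * g (y - a)‖ ≤
      (1 + ‖a‖) ^ (-α) * (Cg * (F x * Kt (x - y))) := by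
    intro x y
    have hPnn : (0:ℝ) ≤ ‖f x‖ * |K (x - y)| * ‖g (y - a)‖ := by positivity
    have htri : 1 + ‖a‖ ≤ (1 + ‖x‖) * ((1 + ‖x - y‖) * (1 + ‖y - a‖)) := by
      have heq : a = x - (x - y) - (y - a) := by abel
      have ha : ‖a‖ ≤ ‖x‖ + ‖x - y‖ + ‖y - a‖ := by
        calc ‖a‖ = ‖x - (x - y) - (y - a)‖ := by rw [← heq]
          _ ≤ ‖x - (x - y)‖ + ‖y - a‖ := norm_sub_le _ _
          _ ≤ (‖x‖ + ‖x - y‖) + ‖y - a‖ := by gcongr; exact norm_sub_le _ _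
      nlinarith [norm_nonneg x, norm_nonneg (x - y), norm_nonneg (y - a),
        mul_nonneg (norm_nonneg x) (norm_nonneg (x - y)),
        mul_nonneg (norm_nonneg x) (norm_nonneg (y - a)),
        mul_nonneg (norm_nonneg (x - y)) (norm_nonneg (y - a)),
        mul_nonneg (mul_nonneg (norm_nonneg x) (norm_nonneg (x - y))) (norm_nonneg (y - a))]
    have hpow : (1 + ‖a‖) ^ α ≤
        (1 + ‖x‖) ^ α * ((1 + ‖x - y‖) ^ α * (1 + ‖y - a‖) ^ α) := by
      rw [← Real.mul_rpow (h1x _).le (h1x _).le,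
        ← Real.mul_rpow (h1x _).le (by positivity)]
      exact Real.rpow_le_rpow (h1x a).le htri hα.le
    have hnorm : ‖f x * (K (x - y) : ℂ) * g (y - a)‖ =
        ‖f x‖ * |K (x - y)| * ‖g (y - a)‖ := by
      rw [norm_mul, norm_mul, Complex.norm_real, Real.norm_eq_abs]
    rw [hnorm]
    have hmain : (1 + ‖a‖) ^ α * (‖f x‖ * |K (x - y)| * ‖g (y - a)‖) ≤
        Cg * (F x * Kt (x - y)) := by
      calc (1 + ‖a‖) ^ α * (‖f x‖ * |K (x - y)| * ‖g (y - a)‖)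
          ≤ ((1 + ‖x‖) ^ α * ((1 + ‖x - y‖) ^ α * (1 + ‖y - a‖) ^ α)) *
            (‖f x‖ * |K (x - y)| * ‖g (y - a)‖) := mul_le_mul_of_nonneg_right hpow hPnn
        _ = (F x * Kt (x - y)) * ((1 + ‖y - a‖) ^ α * ‖g (y - a)‖) := by
            simp only [hF, hKt]; ring
        _ ≤ (F x * Kt (x - y)) * Cg :=
            mul_le_mul_of_nonneg_left (hgb _) (mul_nonneg (hF0 x) (hKt0 _))
        _ = Cg * (F x * Kt (x - y)) := mul_comm _ _
    have hpos : (0:ℝ) < (1 + ‖a‖) ^ α := Real.rpow_pos_of_pos (h1x a) _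
    rw [Real.rpow_neg (h1x a).le, inv_mul_eq_div, le_div_iff₀ hpos, mul_comm]
    exact hmain
  have hinner : ∀ x : E, ‖∫ y, f x * (K (x - y) : ℂ) * g (y - a) ∂μ‖ ≤
      (1 + ‖a‖) ^ (-α) * (Cg * (F x * A)) := by
    intro x
    have hint : Integrable (fun y => (1 + ‖a‖) ^ (-α) * (Cg * (F x * Kt (x - y)))) μ :=
      (((hKtint.comp_sub_left x).const_mul (F x)).const_mul Cg).const_mul _
    calc ‖∫ y, f x * (K (x - y) : ℂ) * g (y - a) ∂μ‖
        ≤ ∫ y, ‖f x * (K (x - y) : ℂ) * g (y - a)‖ ∂μ := norm_integral_le_integral_norm _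
      _ ≤ ∫ y, (1 + ‖a‖) ^ (-α) * (Cg * (F x * Kt (x - y))) ∂μ :=
          integral_mono_of_nonneg (Filter.Eventually.of_forall fun y => norm_nonneg _) hint
            (Filter.Eventually.of_forall fun y => hkey2 x y)
      _ = (1 + ‖a‖) ^ (-α) * (Cg * (F x * A)) := by
          rw [integral_const_mul, integral_const_mul, integral_const_mul,
            integral_sub_left_eq_self Kt μ x]
  have hout : Integrable (fun x => (1 + ‖a‖) ^ (-α) * (Cg * (F x * A))) μ :=
    ((hFint.mul_const A).const_mul Cg).const_mul _
  calc ‖∫ x, ∫ y, f x * (K (x - y) : ℂ) * g (y - a) ∂μ ∂μ‖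
      ≤ ∫ x, ‖∫ y, f x * (K (x - y) : ℂ) * g (y - a) ∂μ‖ ∂μ :=
        norm_integral_le_integral_norm _
    _ ≤ ∫ x, (1 + ‖a‖) ^ (-α) * (Cg * (F x * A)) ∂μ :=
        integral_mono_of_nonneg (Filter.Eventually.of_forall fun x => norm_nonneg _) hout
          (Filter.Eventually.of_forall hinner)
    _ = Cg * A * B * (1 + ‖a‖) ^ (-α) := by
        rw [integral_const_mul, integral_const_mul, integral_mul_const, ← hB]
        ring
end

section
/- Schwinger parametrization of the free covariance: for x ≠ y in ℝ⁴ and m > 0, (m / (4π² |x−y|)) K₁(m|x−y|) = ∫₀^∞ e^(−s m²) (4πs)^(−2) exp(−|x−y|²/(4s)) ds, with the integral absolutely convergent. -/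
open MeasureTheory

/-- The modified Bessel function of the second kind of order 1,
via the standard integral representation `K₁(z) = ∫₀^∞ e^{-z cosh t} cosh t dt`. -/
noncomputable def besselK1 (z : ℝ) : ℝ :=
  ∫ t in Set.Ioi (0 : ℝ), Real.exp (-z * Real.cosh t) * Real.cosh t

lemma sq_le_cosh (u : ℝ) : u ^ 2 / 8 ≤ Real.cosh u := by
  have h1 : |u| / 2 + 1 ≤ Real.exp (|u| / 2) := Real.add_one_le_exp _
  have h2 : Real.exp (|u|) = Real.exp (|u| / 2) * Real.exp (|u| / 2) := by
    rw [← Real.exp_add]; ring_nf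
  have h3 : Real.exp (|u|) ≤ 2 * Real.cosh u := by
    rw [Real.cosh_eq]
    rcases abs_cases u with ⟨h, _⟩ | ⟨h, _⟩ <;> rw [h] <;>
      nlinarith [Real.exp_pos u, Real.exp_pos (-u)]
  nlinarith [abs_nonneg u, sq_abs u]

lemma F_integrable (z : ℝ) (hz : 0 < z) :
    Integrable (fun u : ℝ => Real.exp (-z * Real.cosh u) * Real.exp (-u)) := by
  have hg : Integrable (fun u : ℝ => Real.exp (8 / z - z / 2) *
      Real.exp (-(z / 32) * u ^ 2)) :=
    (integrable_exp_neg_mul_sq (by positivity : (0:ℝ) < z / 32)).const_mul _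
  have hcont : Continuous fun u : ℝ => Real.exp (-z * Real.cosh u) * Real.exp (-u) :=
    (Real.continuous_exp.comp ((continuous_const.mul Real.continuous_cosh))).mul
      (Real.continuous_exp.comp continuous_neg)
  refine hg.mono hcont.aestronglyMeasurable (ae_of_all _ fun u => ?_)
  rw [Real.norm_eq_abs, Real.norm_eq_abs, abs_of_pos (by positivity),
    abs_of_pos (by positivity), ← Real.exp_add, ← Real.exp_add]
  apply Real.exp_le_exp.2
  have hc1 : 1 ≤ Real.cosh u := Real.one_le_cosh u
  have hc2 : u ^ 2 / 8 ≤ Real.cosh u := sq_le_cosh u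
  have hkey : -(8 / z) ≤ z / 32 * u ^ 2 + u := by
    have h0 : (0:ℝ) ≤ z / 32 * (u + 16 / z) ^ 2 := by positivity
    have h1 : z / 32 * (u + 16 / z) ^ 2 = z / 32 * u ^ 2 + u + 8 / z := by
      field_simp; ring
    linarith
  nlinarith [mul_le_mul_of_nonneg_left hc1 (by positivity : (0:ℝ) ≤ z / 2),
    mul_le_mul_of_nonneg_left hc2 (by positivity : (0:ℝ) ≤ z / 2)]

lemma integral_F (z : ℝ) (hz : 0 < z) :
    ∫ u : ℝ, Real.exp (-z * Real.cosh u) * Real.exp (-u) = 2 * besselK1 z := by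
  set F : ℝ → ℝ := fun u => Real.exp (-z * Real.cosh u) * Real.exp (-u) with hFdef
  have hF : Integrable F := F_integrable z hz
  have hFneg : Integrable fun u => F (-u) := hF.comp_neg
  rw [← intervalIntegral.integral_Iic_add_Ioi (hF.integrableOn) (hF.integrableOn)]
  have h1 : ∫ u in Set.Iic (0:ℝ), F u = ∫ u in Set.Ioi (0:ℝ), F (-u) := by
    have := integral_comp_neg_Ioi (0:ℝ) F
    rw [neg_zero] at this
    exact this.symm
  rw [h1, ← integral_add (hFneg.integrableOn) (hF.integrableOn)]
  have h2 : ∫ u in Set.Ioi (0:ℝ), (F (-u) + F u) =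
      ∫ u in Set.Ioi (0:ℝ), 2 * (Real.exp (-z * Real.cosh u) * Real.cosh u) := by
    refine setIntegral_congr_fun measurableSet_Ioi fun u _ => ?_
    simp only [hFdef, Real.cosh_neg, neg_neg]
    rw [Real.cosh_eq]
    ring
  rw [h2, integral_const_mul, besselK1]

theorem schwinger_parametrization (m : ℝ) (hm : 0 < m)
    (x y : EuclideanSpace ℝ (Fin 4)) (hxy : x ≠ y) :
    m / (4 * Real.pi ^ 2 * ‖x - y‖) * besselK1 (m * ‖x - y‖) =
      (∫ s in Set.Ioi (0 : ℝ), Real.exp (-s * m ^ 2) * (4 * Real.pi * s) ^ (-(2 : ℝ)) *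
        Real.exp (-‖x - y‖ ^ 2 / (4 * s))) ∧
    IntegrableOn (fun s : ℝ => Real.exp (-s * m ^ 2) * (4 * Real.pi * s) ^ (-(2 : ℝ)) *
        Real.exp (-‖x - y‖ ^ 2 / (4 * s))) (Set.Ioi 0) := by
  have hr : (0:ℝ) < ‖x - y‖ := by
    rw [norm_pos_iff]; exact sub_ne_zero.2 hxy
  set r : ℝ := ‖x - y‖ with hrdef
  set z : ℝ := m * r with hzdef
  have hz : 0 < z := mul_pos hm hr
  set c : ℝ := r / (2 * m) with hcdef
  have hc : 0 < c := by positivity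
  have hπ : (0:ℝ) < Real.pi := Real.pi_pos
  set g : ℝ → ℝ := fun s => Real.exp (-s * m ^ 2) * (4 * Real.pi * s) ^ (-(2 : ℝ)) *
    Real.exp (-r ^ 2 / (4 * s)) with hgdef
  -- change of variables data
  have himg : (fun u : ℝ => c * Real.exp u) '' Set.univ = Set.Ioi 0 := by
    rw [Set.image_univ]
    ext s
    constructor
    · rintro ⟨u, rfl⟩; exact mul_pos hc (Real.exp_pos u)
    · intro hs
      have hs' : (0:ℝ) < s := hs
      refine ⟨Real.log (s / c), ?_⟩
      show c * Real.exp (Real.log (s / c)) = s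
      rw [Real.exp_log (div_pos hs' hc)]
      field_simp
  have hderiv : ∀ u ∈ (Set.univ : Set ℝ), HasDerivWithinAt (fun u : ℝ => c * Real.exp u)
      (c * Real.exp u) Set.univ u :=
    fun u _ => ((Real.hasDerivAt_exp u).const_mul c).hasDerivWithinAt
  have hinj : Set.InjOn (fun u : ℝ => c * Real.exp u) Set.univ := by
    intro a _ b _ h
    exact Real.exp_injective (mul_left_cancel₀ (ne_of_gt hc) h)
  -- pointwise identity for the transformed integrand
  have hpt : ∀ u : ℝ, |c * Real.exp u| • g (c * Real.exp u) =
      (1 / ((4 * Real.pi) ^ 2 * c)) * (Real.exp (-z * Real.cosh u) * Real.exp (-u)) := by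
    intro u
    have hE : (0:ℝ) < Real.exp u := Real.exp_pos u
    have hA : (0:ℝ) < 4 * Real.pi * (c * Real.exp u) := by positivity
    rw [smul_eq_mul, abs_of_pos (by positivity), hgdef]
    simp only
    rw [Real.rpow_neg hA.le, show (2:ℝ) = ((2:ℕ):ℝ) by norm_num, Real.rpow_natCast]
    have e1 : Real.exp (-(c * Real.exp u) * m ^ 2) = Real.exp (-(z / 2) * Real.exp u) := by
      congr 1
      rw [hcdef, hzdef]
      field_simp
    have e2 : Real.exp (-r ^ 2 / (4 * (c * Real.exp u))) =
        Real.exp (-(z / 2) * (Real.exp u)⁻¹) := by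
      congr 1
      rw [hcdef, hzdef]
      field_simp
      ring
    have e3 : Real.exp (-z * Real.cosh u) =
        Real.exp (-(z / 2) * Real.exp u) * Real.exp (-(z / 2) * (Real.exp u)⁻¹) := by
      rw [← Real.exp_add]
      congr 1
      rw [Real.cosh_eq, Real.exp_neg]
      ring
    rw [e1, e2, e3, Real.exp_neg]
    field_simp
  have hFi : Integrable (fun u : ℝ => Real.exp (-z * Real.cosh u) * Real.exp (-u)) :=
    F_integrable z hz
  have hInt : IntegrableOn g (Set.Ioi 0) := by
    rw [← himg, integrableOn_image_iff_integrableOn_abs_deriv_smul MeasurableSet.univ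
      hderiv hinj g]
    rw [integrableOn_univ]
    have : (fun u : ℝ => |c * Real.exp u| • g (c * Real.exp u)) =
        fun u : ℝ => (1 / ((4 * Real.pi) ^ 2 * c)) *
          (Real.exp (-z * Real.cosh u) * Real.exp (-u)) := funext hpt
    rw [this]
    exact hFi.const_mul _
  refine ⟨?_, hInt⟩
  have hchg : ∫ s in Set.Ioi (0:ℝ), g s =
      ∫ u : ℝ, |c * Real.exp u| • g (c * Real.exp u) := by
    rw [← himg, integral_image_eq_integral_abs_deriv_smul MeasurableSet.univ hderiv hinj g,
      setIntegral_univ]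
  rw [show (∫ s in Set.Ioi (0:ℝ), Real.exp (-s * m ^ 2) * (4 * Real.pi * s) ^ (-(2 : ℝ)) *
      Real.exp (-r ^ 2 / (4 * s))) = ∫ s in Set.Ioi (0:ℝ), g s from rfl, hchg]
  simp only [hpt]
  rw [integral_const_mul, integral_F z hz]
  rw [hcdef, hzdef]
  field_simp
  ring
end

section
/- Polynomial clustering of the massive GFF: let μ be the Gaussian free field measure on tempered distributions over ℝ⁴ with mass m > 0 and covariance S₂(f,g) = ∫∫ f(x) K(x−y) g(y) dx dy where |K(z)| ≤ C|z|^{−2} e^{−m|z|} for |z| ≥ R₀ and K is locally integrable. Then for any Schwartz functions f, g and any α > 0, there exists a constant C' such that |E_μ[e^{⟨ω,f⟩ + ⟨T_s ω, g⟩}] − E_μ[e^{⟨ω,f⟩}] E_μ[e^{⟨ω,g⟩}]| ≤ C' (1+s)^{−α} for all s ≥ 0. -/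
open MeasureTheory

/-- Real Schwartz test functions on ℝ⁴. -/
abbrev SchwartzTestFunction : Type := SchwartzMap (EuclideanSpace ℝ (Fin 4)) ℝ

/-- Tempered distributions (the weak dual of Schwartz space). -/
abbrev FieldConfiguration : Type := WeakDual ℝ SchwartzTestFunction

noncomputable instance : MeasurableSpace FieldConfiguration := borel _

/-- The unit vector in the time direction. -/
noncomputable def timeDir : EuclideanSpace ℝ (Fin 4) := EuclideanSpace.single 0 (1 : ℝ)

/-!
Gaussian factorization and translation invariance turn the correlation into
`E[e^{ω f}] E[e^{ω g}] (e^{S₂(f, g(· + s e₀))} - 1)`, so by `|e^z - 1| ≤ |z| e^{|z|}` it suffices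
that the shifted covariance decays faster than any power of `1 + s`. For this we use the Peetre
inequality `1 + ‖v‖ ≤ (1 + ‖x‖)(1 + ‖x - y‖)(1 + ‖y + v‖)`: it moves a weight `(1 + s)^k` onto
the three factors of `f(x) K(x - y) g(y + v)`, and each weighted factor is still integrable or
bounded, the kernel thanks to its exponential decay.
-/

open Module Asymptotics Filter

lemma one_add_norm_le_mul_mul {E : Type*} [SeminormedAddCommGroup E] (x y v : E) :
    1 + ‖v‖ ≤ (1 + ‖x‖) * (1 + ‖x - y‖) * (1 + ‖y + v‖) := by
  have hv : ‖v‖ ≤ ‖y + v‖ + ‖x - y‖ + ‖x‖ := calc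
    ‖v‖ = ‖(y + v) + (x - y) - x‖ := by congr 1; abel
    _ ≤ ‖y + v‖ + ‖x - y‖ + ‖x‖ := (norm_sub_le _ _).trans (by gcongr; exact norm_add_le _ _)
  have hx := norm_nonneg x
  have hxy := norm_nonneg (x - y)
  have hyv := norm_nonneg (y + v)
  nlinarith [mul_nonneg hx hxy, mul_nonneg hx hyv, mul_nonneg hxy hyv,
    mul_nonneg (mul_nonneg hx hxy) hyv]

lemma Real.pow_mul_exp_neg_mul_le {m t : ℝ} (hm : 0 < m) (ht : 0 ≤ t) (n : ℕ) :
    t ^ n * Real.exp (-(m * t)) ≤ n.factorial / m ^ n := by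
  have h := Real.pow_div_factorial_le_exp _ (mul_nonneg hm.le ht) n
  rw [Real.exp_neg, ← div_eq_mul_inv, div_le_div_iff₀ (Real.exp_pos _) (by positivity)]
  rw [div_le_iff₀ (by positivity), mul_pow] at h
  linarith

lemma Real.abs_exp_sub_one_le_abs_mul_exp_abs (x : ℝ) : |Real.exp x - 1| ≤ |x| * Real.exp |x| := by
  have h := Complex.norm_exp_sub_sum_le_norm_mul_exp (x : ℂ) 1
  simp only [Finset.range_one, Finset.sum_singleton, pow_zero, Nat.factorial_zero,
    Nat.cast_one, div_one, pow_one, Complex.norm_real, Real.norm_eq_abs] at h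
  exact_mod_cast h

lemma inv_pow_natCeil_le_rpow_neg {t : ℝ} (ht : 1 ≤ t) (α : ℝ) :
    (t ^ ⌈α⌉₊)⁻¹ ≤ t ^ (-α) := by
  rw [← Real.rpow_natCast, ← Real.rpow_neg (by positivity)]
  exact Real.rpow_le_rpow_of_exponent_le ht (neg_le_neg (Nat.le_ceil α))

lemma abs_le_abs_mul_exp_of_le_mul_rpow_neg_mul_exp {E : Type*} [SeminormedAddCommGroup E]
    {K : E → ℝ} {C R m p : ℝ} (hp : 0 ≤ p)
    (hK : ∀ z, R ≤ ‖z‖ → |K z| ≤ C * ‖z‖ ^ (-p) * Real.exp (-m * ‖z‖)) (z : E)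
    (hz : max R 1 ≤ ‖z‖) : |K z| ≤ |C| * Real.exp (-(m * ‖z‖)) := calc
  |K z| ≤ C * ‖z‖ ^ (-p) * Real.exp (-m * ‖z‖) := hK z (le_of_max_le_left hz)
  _ ≤ |C| * 1 * Real.exp (-(m * ‖z‖)) := by
      rw [neg_mul]
      gcongr
      · exact le_abs_self C
      · exact Real.rpow_le_one_of_one_le_of_nonpos (le_of_max_le_right hz) (neg_nonpos.2 hp)
  _ = |C| * Real.exp (-(m * ‖z‖)) := by rw [mul_one]

section Convolution

variable {G E : Type*} [AddGroup G] [MeasurableSpace G] [MeasurableAdd G] [MeasurableNeg G]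
  {μ : Measure G} [μ.IsAddLeftInvariant] [μ.IsNegInvariant]
  [NormedAddCommGroup E] [NormedSpace ℝ E]

theorem norm_integral_integral_le_of_norm_le_mul_sub {h : G → G → E} {F k : G → ℝ}
    (hF : Integrable F μ) (hk : Integrable k μ) (hh : ∀ x y, ‖h x y‖ ≤ F x * k (x - y)) :
    ‖∫ x, ∫ y, h x y ∂μ ∂μ‖ ≤ (∫ x, F x ∂μ) * ∫ z, k z ∂μ := by
  refine (norm_integral_le_of_norm_le (hF.mul_const (∫ z, k z ∂μ))
    (.of_forall fun x => ?_)).trans_eq (integral_mul_const _ _)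
  calc ‖∫ y, h x y ∂μ‖ ≤ ∫ y, F x * k (x - y) ∂μ :=
        norm_integral_le_of_norm_le ((hk.comp_sub_left x).const_mul _) (.of_forall (hh x))
    _ = F x * ∫ z, k z ∂μ := by rw [integral_const_mul, integral_sub_left_eq_self]

end Convolution

theorem SchwartzMap.exists_one_add_norm_pow_mul_le {E F : Type*} [NormedAddCommGroup E]
    [NormedSpace ℝ E] [NormedAddCommGroup F] [NormedSpace ℝ F] (f : SchwartzMap E F) (k : ℕ) :
    ∃ M, ∀ x, (1 + ‖x‖) ^ k * ‖f x‖ ≤ M :=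
  ⟨_, fun x => by
    simpa using f.one_add_le_sup_seminorm_apply (𝕜 := ℝ) (m := (k, 0)) le_rfl le_rfl x⟩

section Weighted

variable {E F : Type*} [NormedAddCommGroup E] [NormedSpace ℝ E] [FiniteDimensional ℝ E]
  [MeasurableSpace E] [BorelSpace E] (μ : Measure E) [μ.IsAddHaarMeasure]
  [NormedAddCommGroup F]

theorem MeasureTheory.LocallyIntegrable.integrable_of_one_add_norm_pow_mul_le {φ : E → F}
    (hφ : LocallyIntegrable φ μ) {R B : ℝ}
    (hB : ∀ x, R ≤ ‖x‖ → (1 + ‖x‖) ^ (finrank ℝ E + 1) * ‖φ x‖ ≤ B) : Integrable φ μ := by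
  have hr : (finrank ℝ E : ℝ) < (finrank ℝ E + 1 : ℕ) := by push_cast; linarith
  refine hφ.integrable_of_isBigO_cocompact ?_
    ((integrable_one_add_norm (μ := μ) hr).integrableAtFilter _)
  refine IsBigO.of_bound B ?_
  filter_upwards [tendsto_norm_cocompact_atTop.eventually_ge_atTop R] with x hx
  have hpos : 0 < (1 + ‖x‖) ^ (finrank ℝ E + 1) := by positivity
  rw [Real.rpow_neg (by positivity), Real.rpow_natCast, norm_inv, Real.norm_of_nonneg hpos.le,
    ← div_eq_mul_inv, le_div_iff₀ hpos, mul_comm]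
  exact hB x hx

theorem SchwartzMap.integrable_one_add_norm_pow_mul [NormedSpace ℝ F] (f : SchwartzMap E F)
    (k : ℕ) : Integrable (fun x => (1 + ‖x‖) ^ k * ‖f x‖) μ := by
  obtain ⟨M, hM⟩ := f.exists_one_add_norm_pow_mul_le (k + (finrank ℝ E + 1))
  refine (Continuous.locallyIntegrable (by fun_prop)).integrable_of_one_add_norm_pow_mul_le μ
    (R := 0) (B := M) fun x _ => ?_
  calc _ = (1 + ‖x‖) ^ (k + (finrank ℝ E + 1)) * ‖f x‖ := by
        rw [norm_mul, norm_pow, norm_norm, Real.norm_of_nonneg (by positivity), pow_add]; ring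
    _ ≤ M := hM x

theorem MeasureTheory.LocallyIntegrable.integrable_one_add_norm_pow_mul_of_exp_decay {K : E → F}
    (hK : LocallyIntegrable K μ) {m C R : ℝ} (hm : 0 < m)
    (hdecay : ∀ z, R ≤ ‖z‖ → ‖K z‖ ≤ C * Real.exp (-(m * ‖z‖))) (k : ℕ) :
    Integrable (fun z => (1 + ‖z‖) ^ k * ‖K z‖) μ := by
  set n := k + (finrank ℝ E + 1)
  have hKnorm : LocallyIntegrable (fun z => ‖K z‖) μ := fun z => (hK z).norm
  refine (hKnorm.continuous_mul (by fun_prop)).integrable_of_one_add_norm_pow_mul_le μ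
    (R := R) (B := |C| * (Real.exp m * (n.factorial / m ^ n))) fun z hz => ?_
  have hKz : ‖K z‖ ≤ |C| * Real.exp (-(m * ‖z‖)) :=
    (hdecay z hz).trans (mul_le_mul_of_nonneg_right (le_abs_self C) (Real.exp_pos _).le)
  calc (1 + ‖z‖) ^ (finrank ℝ E + 1) * ‖(1 + ‖z‖) ^ k * ‖K z‖‖ = (1 + ‖z‖) ^ n * ‖K z‖ := by
        rw [norm_mul, norm_pow, norm_norm, Real.norm_of_nonneg (by positivity), pow_add]; ring
    _ ≤ (1 + ‖z‖) ^ n * (|C| * Real.exp (-(m * ‖z‖))) := by gcongr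
    _ = |C| * (Real.exp m * ((1 + ‖z‖) ^ n * Real.exp (-(m * (1 + ‖z‖))))) := by
        have hshift : Real.exp m * Real.exp (-(m * (1 + ‖z‖))) = Real.exp (-(m * ‖z‖)) := by
          rw [← Real.exp_add]; ring_nf
        rw [← hshift]; ring
    _ ≤ |C| * (Real.exp m * (n.factorial / m ^ n)) := by
        gcongr; exact Real.pow_mul_exp_neg_mul_le hm (by positivity) n

theorem exists_abs_integral_integral_kernel_translate_le {K : E → ℝ} (hK : LocallyIntegrable K μ)
    {m C R : ℝ} (hm : 0 < m) (hdecay : ∀ z, R ≤ ‖z‖ → |K z| ≤ C * Real.exp (-(m * ‖z‖)))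
    (f g : SchwartzMap E ℝ) (k : ℕ) :
    ∃ c, ∀ v : E, |∫ x, ∫ y, f x * K (x - y) * g (y + v) ∂μ ∂μ| ≤ c / (1 + ‖v‖) ^ k := by
  obtain ⟨M, hM⟩ := g.exists_one_add_norm_pow_mul_le k
  have hKw := hK.integrable_one_add_norm_pow_mul_of_exp_decay μ hm hdecay k
  refine ⟨M * ((∫ x, (1 + ‖x‖) ^ k * ‖f x‖ ∂μ) * ∫ z, (1 + ‖z‖) ^ k * ‖K z‖ ∂μ), fun v => ?_⟩
  have hv : 0 < (1 + ‖v‖) ^ k := by positivity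
  have hpointwise : ∀ x y, ‖f x * K (x - y) * g (y + v)‖ ≤
      M / (1 + ‖v‖) ^ k * ((1 + ‖x‖) ^ k * ‖f x‖) * ((1 + ‖x - y‖) ^ k * ‖K (x - y)‖) := by
    intro x y
    have hpeetre := pow_le_pow_left₀ (by positivity) (one_add_norm_le_mul_mul x y v) k
    have hg := hM (y + v)
    rw [div_mul_eq_mul_div, div_mul_eq_mul_div, le_div_iff₀ hv, norm_mul, norm_mul]
    calc ‖f x‖ * ‖K (x - y)‖ * ‖g (y + v)‖ * (1 + ‖v‖) ^ k
        ≤ ‖f x‖ * ‖K (x - y)‖ * ‖g (y + v)‖ *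
            ((1 + ‖x‖) ^ k * (1 + ‖x - y‖) ^ k * (1 + ‖y + v‖) ^ k) := by
          rw [← mul_pow, ← mul_pow]; gcongr
      _ = (1 + ‖x‖) ^ k * ‖f x‖ * ((1 + ‖x - y‖) ^ k * ‖K (x - y)‖) *
            ((1 + ‖y + v‖) ^ k * ‖g (y + v)‖) := by ring
      _ ≤ (1 + ‖x‖) ^ k * ‖f x‖ * ((1 + ‖x - y‖) ^ k * ‖K (x - y)‖) * M := by gcongr
      _ = M * ((1 + ‖x‖) ^ k * ‖f x‖) * ((1 + ‖x - y‖) ^ k * ‖K (x - y)‖) := by ring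
  rw [← Real.norm_eq_abs]
  refine (norm_integral_integral_le_of_norm_le_mul_sub
    ((f.integrable_one_add_norm_pow_mul μ k).const_mul _) hKw hpointwise).trans_eq ?_
  rw [integral_const_mul]
  field_simp

end Weighted

theorem gff_polynomial_clustering_general
    (μ : Measure FieldConfiguration)
    (m : ℝ) (hm : 0 < m)
    (K : EuclideanSpace ℝ (Fin 4) → ℝ)
    (hKloc : LocallyIntegrable K volume)
    (C R₀ : ℝ)
    (hKdecay : ∀ z : EuclideanSpace ℝ (Fin 4), R₀ ≤ ‖z‖ →
      |K z| ≤ C * ‖z‖ ^ (-(2 : ℝ)) * Real.exp (-m * ‖z‖))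
    (S₂ : SchwartzTestFunction → SchwartzTestFunction → ℝ)
    (hS₂ : ∀ f g : SchwartzTestFunction, S₂ f g = ∫ x, ∫ y, f x * K (x - y) * g y)
    (hGauss : ∀ f g : SchwartzTestFunction,
      (∫ ω, Real.exp (ω (f + g)) ∂μ) =
        (∫ ω, Real.exp (ω f) ∂μ) * (∫ ω, Real.exp (ω g) ∂μ) * Real.exp (S₂ f g))
    (τ : ℝ → SchwartzTestFunction → SchwartzTestFunction)
    (hτ : ∀ (s : ℝ) (g : SchwartzTestFunction) (x : EuclideanSpace ℝ (Fin 4)),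
      τ s g x = g (x - s • timeDir))
    (T : ℝ → FieldConfiguration → FieldConfiguration)
    (hdual : ∀ (s : ℝ) (ω : FieldConfiguration) (g : SchwartzTestFunction),
      (T s ω) g = ω (τ (-s) g))
    (hinv : ∀ (s : ℝ) (g : SchwartzTestFunction),
      (∫ ω, Real.exp (ω (τ s g)) ∂μ) = ∫ ω, Real.exp (ω g) ∂μ)
    (f g : SchwartzTestFunction) (α : ℝ) :
    ∃ C' : ℝ, ∀ s : ℝ, 0 ≤ s →
      |(∫ ω, Real.exp (ω f + (T s ω) g) ∂μ) -
          (∫ ω, Real.exp (ω f) ∂μ) * (∫ ω, Real.exp (ω g) ∂μ)| ≤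
        C' * (1 + s) ^ (-α) := by
  set A := ∫ ω, Real.exp (ω f) ∂μ
  set B := ∫ ω, Real.exp (ω g) ∂μ
  have hcorr : ∀ s, ∫ ω, Real.exp (ω f + T s ω g) ∂μ = A * B * Real.exp (S₂ f (τ (-s) g)) := by
    intro s
    simp_rw [hdual, ← map_add]
    rw [hGauss, hinv]
  obtain ⟨c, hc⟩ := exists_abs_integral_integral_kernel_translate_le volume hKloc hm
    (abs_le_abs_mul_exp_of_le_mul_rpow_neg_mul_exp (by norm_num) hKdecay) f g ⌈α⌉₊
  have hc0 : 0 ≤ c := by simpa using (abs_nonneg _).trans (hc 0)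
  refine ⟨|A * B| * (c * Real.exp c), fun s hs => ?_⟩
  have hS : |S₂ f (τ (-s) g)| ≤ c / (1 + s) ^ ⌈α⌉₊ := by
    simpa [hS₂, hτ, norm_smul, timeDir, abs_of_nonneg hs] using hc (s • timeDir)
  have hS' : |S₂ f (τ (-s) g)| ≤ c := hS.trans (div_le_self hc0 (one_le_pow₀ (by linarith)))
  rw [hcorr, ← mul_sub_one, abs_mul]
  calc |A * B| * |Real.exp (S₂ f (τ (-s) g)) - 1|
      ≤ |A * B| * (c / (1 + s) ^ ⌈α⌉₊ * Real.exp c) := by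
        gcongr
        exact (Real.abs_exp_sub_one_le_abs_mul_exp_abs _).trans (by gcongr)
    _ = |A * B| * (c * Real.exp c) * ((1 + s) ^ ⌈α⌉₊)⁻¹ := by ring
    _ ≤ |A * B| * (c * Real.exp c) * (1 + s) ^ (-α) := by
        gcongr
        exact inv_pow_natCeil_le_rpow_neg (by linarith) α

theorem gff_polynomial_clustering
    (μ : Measure FieldConfiguration) [IsProbabilityMeasure μ]
    (m : ℝ) (hm : 0 < m)
    (K : EuclideanSpace ℝ (Fin 4) → ℝ)
    (hKloc : LocallyIntegrable K volume)
    (C R₀ : ℝ)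
    (hKdecay : ∀ z : EuclideanSpace ℝ (Fin 4), R₀ ≤ ‖z‖ →
      |K z| ≤ C * ‖z‖ ^ (-(2 : ℝ)) * Real.exp (-m * ‖z‖))
    (S₂ : SchwartzTestFunction → SchwartzTestFunction → ℝ)
    (hS₂ : ∀ f g : SchwartzTestFunction, S₂ f g = ∫ x, ∫ y, f x * K (x - y) * g y)
    (hGauss : ∀ f g : SchwartzTestFunction,
      (∫ ω, Real.exp (ω (f + g)) ∂μ) =
        (∫ ω, Real.exp (ω f) ∂μ) * (∫ ω, Real.exp (ω g) ∂μ) * Real.exp (S₂ f g))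
    (τ : ℝ → SchwartzTestFunction → SchwartzTestFunction)
    (hτ : ∀ (s : ℝ) (g : SchwartzTestFunction) (x : EuclideanSpace ℝ (Fin 4)),
      τ s g x = g (x - s • timeDir))
    (T : ℝ → FieldConfiguration → FieldConfiguration)
    (hdual : ∀ (s : ℝ) (ω : FieldConfiguration) (g : SchwartzTestFunction),
      (T s ω) g = ω (τ (-s) g))
    (hinv : ∀ (s : ℝ) (g : SchwartzTestFunction),
      (∫ ω, Real.exp (ω (τ s g)) ∂μ) = ∫ ω, Real.exp (ω g) ∂μ)
    (f g : SchwartzTestFunction) (α : ℝ) (hα : 0 < α) :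
    ∃ C' : ℝ, ∀ s : ℝ, 0 ≤ s →
      |(∫ ω, Real.exp (ω f + (T s ω) g) ∂μ) -
          (∫ ω, Real.exp (ω f) ∂μ) * (∫ ω, Real.exp (ω g) ∂μ)| ≤
        C' * (1 + s) ^ (-α) :=
  gff_polynomial_clustering_general μ m hm K hKloc C R₀ hKdecay S₂ hS₂ hGauss τ hτ T hdual hinv f g
    α
end
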